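/- arXiv:1807.05552 — 2 statements merged into one kernel-verified Lean document; each statement's English description precedes it below -/
import Mathlib

section
/- Let b > 1, r ≥ 0, f ∈ C^{r,1}([0,1]), and let L_m^0, L_m^1 (0 ≤ m ≤ r) be continuation basis functions as in the framework. Let 0 ≤ s ≤ r and let F̂ be a 2×(r+1) real matrix that is s-exact with respect to f, and let f̂_c : [1−b,1] → ℝ be the approximate continuation (f̂_c = f on [0,1] and f̂_c = L_r(F̂) on [1−b,0)). Then f̂_c is s-times continuously differentiable on [1−b,1], its s-th derivative is Lipschitz continuous on [1−b,1], and f̂_c^{(ℓ)}(1−b) = f̂_c^{(ℓ)}(1) for all 0 ≤ ℓ ≤ s. -/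
/-!
On `[1 - b, 0]` the continuation `L_r(F̂)` is a linear combination of `C^{r,1}` functions, hence
itself `C^{r,1}`, and the duality conditions on the basis say that its `ℓ`-th derivative at `0`
(resp. at `1 - b`) is the entry `F̂ 0 ℓ` (resp. `F̂ 1 ℓ`). By `s`-exactness these are `f^{(ℓ)}(0)`
and `f^{(ℓ)}(1)` for `ℓ ≤ s`. Two `C^s` pieces whose derivatives up to order `s` agree at the
junction glue, by induction on the order, to a `C^s` function whose derivatives are the glued
derivatives; Lipschitz bounds on the two halves combine through the junction point.
-/

open MeasureTheory Real Set

noncomputable section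

/-- The class `C^{r,1}([lo,hi])`: `r`-times continuously differentiable with
Lipschitz continuous `r`-th derivative. -/
def Cr1 (r : ℕ) (lo hi : ℝ) (f : ℝ → ℝ) : Prop :=
  ContDiffOn ℝ r f (Icc lo hi) ∧
    ∃ K : NNReal, LipschitzOnWith K (iteratedDerivWithin r f (Icc lo hi)) (Icc lo hi)

/-- The continuation operator `L_r` applied to a boundary-data matrix, built from
basis functions `L0 m` and `L1 m`. -/
def contOp (r : ℕ) (L0 L1 : ℕ → ℝ → ℝ) (A : Fin 2 → Fin (r + 1) → ℝ) (x : ℝ) : ℝ :=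
  ∑ m : Fin (r + 1), A 0 m * L0 (m : ℕ) x + ∑ m : Fin (r + 1), A 1 m * L1 (m : ℕ) x

/-- The exact boundary data matrix `F` of `f`: `F j m = f^{(m)}(j)` for `j ∈ {0,1}`. -/
def Fmat (r : ℕ) (f : ℝ → ℝ) : Fin 2 → Fin (r + 1) → ℝ :=
  fun j m => iteratedDerivWithin (m : ℕ) f (Icc (0 : ℝ) 1) ((j : ℕ) : ℝ)

/-- `A` is `s`-exact with respect to `B`: columns `0` through `s` agree. -/
def sExact (r s : ℕ) (A B : Fin 2 → Fin (r + 1) → ℝ) : Prop :=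
  ∀ j : Fin 2, ∀ m : Fin (r + 1), (m : ℕ) ≤ s → A j m = B j m

/-- The (approximate) continuation of `f`, equal to `f` on `[0,1]` (i.e. for `0 ≤ x`)
and to the continuation polynomial/operator value `g x` for `x < 0`. -/
def extCont (f g : ℝ → ℝ) : ℝ → ℝ := fun x => if 0 ≤ x then f x else g x

open scoped NNReal

theorem LipschitzOnWith.congr {α β : Type*} [PseudoEMetricSpace α] [PseudoEMetricSpace β]
    {K : ℝ≥0} {f g : α → β} {s : Set α} (hf : LipschitzOnWith K f s) (hfg : EqOn f g s) :
    LipschitzOnWith K g s := fun x hx y hy => by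
  rw [← hfg hx, ← hfg hy]
  exact hf hx hy

theorem LipschitzOnWith.sum {α ι E : Type*} [PseudoEMetricSpace α] [SeminormedAddCommGroup E]
    {s : Set α} {t : Finset ι} {f : ι → α → E} {K : ι → ℝ≥0}
    (hf : ∀ i ∈ t, LipschitzOnWith (K i) (f i) s) :
    LipschitzOnWith (∑ i ∈ t, K i) (fun x => ∑ i ∈ t, f i x) s := by
  classical
  induction t using Finset.induction_on with
  | empty => simpa using (LipschitzWith.const (0 : E)).lipschitzOnWith (s := s)
  | insert i t hi ih =>
    rw [Finset.forall_mem_insert] at hf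
    simp only [Finset.sum_insert hi]
    exact hf.1.add (ih hf.2)

theorem LipschitzOnWith.const_mul {α : Type*} [PseudoEMetricSpace α] {K : ℝ≥0} {f : α → ℝ}
    {s : Set α} (hf : LipschitzOnWith K f s) (c : ℝ) :
    LipschitzOnWith (‖c‖₊ * K) (fun x => c * f x) s :=
  (lipschitzWith_smul c).comp_lipschitzOnWith hf

theorem LipschitzOnWith.Icc_union {α : Type*} [PseudoMetricSpace α] {K₁ K₂ : ℝ≥0} {w : ℝ → α}
    {a b c : ℝ} (h₁ : LipschitzOnWith K₁ w (Icc a b)) (h₂ : LipschitzOnWith K₂ w (Icc b c)) :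
    LipschitzOnWith (max K₁ K₂) w (Icc a c) := by
  have h₁' := (h₁.weaken (le_max_left K₁ K₂)).dist_le_mul
  have h₂' := (h₂.weaken (le_max_right K₁ K₂)).dist_le_mul
  refine LipschitzOnWith.of_dist_le_mul fun x hx y hy => ?_
  wlog hxy : x ≤ y generalizing x y
  · rw [dist_comm, dist_comm x]
    exact this y hy x hx (le_of_not_ge hxy)
  rcases le_total y b with hyb | hby
  · exact h₁' x ⟨hx.1, hxy.trans hyb⟩ y ⟨hy.1, hyb⟩
  rcases le_total b x with hbx | hxb
  · exact h₂' x ⟨hbx, hx.2⟩ y ⟨hby, hy.2⟩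
  have hxb' : x ∈ Icc a b := ⟨hx.1, hxb⟩
  have hby' : y ∈ Icc b c := ⟨hby, hy.2⟩
  have hb₁ : b ∈ Icc a b := ⟨hx.1.trans hxb, le_rfl⟩
  have hb₂ : b ∈ Icc b c := ⟨le_rfl, hby.trans hy.2⟩
  have hsplit : dist x b + dist b y = dist x y := by
    simp only [Real.dist_eq, abs_of_nonpos (sub_nonpos.2 hxb), abs_of_nonpos (sub_nonpos.2 hby),
      abs_of_nonpos (sub_nonpos.2 hxy)]
    ring
  calc dist (w x) (w y) ≤ dist (w x) (w b) + dist (w b) (w y) := dist_triangle _ _ _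
    _ ≤ max K₁ K₂ * dist x b + max K₁ K₂ * dist b y :=
        add_le_add (h₁' x hxb' b hb₁) (h₂' b hb₂ y hby')
    _ = max K₁ K₂ * dist x y := by rw [← mul_add, hsplit]

theorem ContDiffOn.hasDerivWithinAt_iteratedDerivWithin {𝕜 E : Type*}
    [NontriviallyNormedField 𝕜] [NormedAddCommGroup E] [NormedSpace 𝕜 E] {n : WithTop ℕ∞} {k : ℕ}
    {f : 𝕜 → E} {s : Set 𝕜} {x : 𝕜}
    (hf : ContDiffOn 𝕜 n f s) (hs : UniqueDiffOn 𝕜 s) (hk : k < n) (hx : x ∈ s) :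
    HasDerivWithinAt (iteratedDerivWithin k f s) (iteratedDerivWithin (k + 1) f s x) s x := by
  rw [iteratedDerivWithin_succ]
  exact (hf.differentiableOn_iteratedDerivWithin hk hs x hx).hasDerivWithinAt

theorem ContDiffOn.exists_lipschitzOnWith_iteratedDerivWithin {E : Type*} [NormedAddCommGroup E]
    [NormedSpace ℝ E] {n k : ℕ} {f : ℝ → E} {lo hi : ℝ} (hf : ContDiffOn ℝ n f (Icc lo hi))
    (hlh : lo < hi) (hk : k < n) :
    ∃ K : ℝ≥0, LipschitzOnWith K (iteratedDerivWithin k f (Icc lo hi)) (Icc lo hi) := by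
  have hs := uniqueDiffOn_Icc hlh
  obtain ⟨C, hC⟩ := isCompact_Icc.exists_bound_of_continuousOn
    (hf.continuousOn_iteratedDerivWithin (m := k + 1) (by exact_mod_cast hk) hs)
  refine ⟨C.toNNReal, (convex_Icc lo hi).lipschitzOnWith_of_nnnorm_derivWithin_le
    (hf.differentiableOn_iteratedDerivWithin (by exact_mod_cast hk) hs) fun x hx => ?_⟩
  rw [← iteratedDerivWithin_succ, ← norm_toNNReal]
  exact Real.toNNReal_le_toNNReal (hC x hx)

namespace Cr1

variable {r s : ℕ} {lo hi : ℝ} {f : ℝ → ℝ}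

theorem of_le (hf : Cr1 r lo hi f) (hlh : lo < hi) (hs : s ≤ r) : Cr1 s lo hi f := by
  refine ⟨hf.1.of_le (by exact_mod_cast hs), ?_⟩
  rcases hs.eq_or_lt with rfl | hlt
  · exact hf.2
  · exact hf.1.exists_lipschitzOnWith_iteratedDerivWithin hlh hlt

end Cr1

section Gluing

variable {a c : ℝ} {f g : ℝ → ℝ} {s : ℕ}

theorem extCont_eqOn_Ici (f g : ℝ → ℝ) : EqOn (extCont f g) f (Ici 0) :=
  fun _ hx => if_pos hx

theorem extCont_eqOn_Iic (h0 : f 0 = g 0) : EqOn (extCont f g) g (Iic 0) := fun x hx => by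
  rcases (show x ≤ 0 from hx).eq_or_lt with rfl | hlt
  · exact (if_pos le_rfl).trans h0
  · exact if_neg hlt.not_ge

theorem hasDerivWithinAt_extCont {f' g' : ℝ → ℝ} (ha : a ≤ 0) (hc : 0 ≤ c)
    (hf : ∀ x ∈ Icc 0 c, HasDerivWithinAt f (f' x) (Icc 0 c) x)
    (hg : ∀ x ∈ Icc a 0, HasDerivWithinAt g (g' x) (Icc a 0) x)
    (h0 : f 0 = g 0) (h0' : f' 0 = g' 0) (x : ℝ) :
    HasDerivWithinAt (extCont f g) (extCont f' g' x) (Icc a c) x := by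
  rw [← Icc_union_Icc_eq_Icc ha hc]
  refine .union ?_ ?_
  · by_cases hx : x ∈ Icc a 0
    · rw [extCont_eqOn_Iic h0' hx.2]
      exact (hg x hx).congr_of_mem (fun y hy => extCont_eqOn_Iic h0 hy.2) hx
    · exact HasFDerivWithinAt.of_notMem_closure (by rwa [isClosed_Icc.closure_eq])
  · by_cases hx : x ∈ Icc 0 c
    · rw [extCont_eqOn_Ici f' g' hx.1]
      exact (hf x hx).congr_of_mem (fun y hy => extCont_eqOn_Ici f g hy.1) hx
    · exact HasFDerivWithinAt.of_notMem_closure (by rwa [isClosed_Icc.closure_eq])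

theorem hasDerivWithinAt_extCont_iteratedDerivWithin
    (ha : a < 0) (hc : 0 < c) (hf : ContDiffOn ℝ s f (Icc 0 c)) (hg : ContDiffOn ℝ s g (Icc a 0))
    (h0 : ∀ n ≤ s, iteratedDerivWithin n f (Icc 0 c) 0 = iteratedDerivWithin n g (Icc a 0) 0)
    {n : ℕ} (hn : n < s) (x : ℝ) :
    HasDerivWithinAt
      (extCont (iteratedDerivWithin n f (Icc 0 c)) (iteratedDerivWithin n g (Icc a 0)))
      (extCont (iteratedDerivWithin (n + 1) f (Icc 0 c))
        (iteratedDerivWithin (n + 1) g (Icc a 0)) x) (Icc a c) x := by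
  have hn' : (n : WithTop ℕ∞) < s := by exact_mod_cast hn
  exact hasDerivWithinAt_extCont ha.le hc.le
    (fun _ hy => hf.hasDerivWithinAt_iteratedDerivWithin (uniqueDiffOn_Icc hc) hn' hy)
    (fun _ hy => hg.hasDerivWithinAt_iteratedDerivWithin (uniqueDiffOn_Icc ha) hn' hy)
    (h0 n hn.le) (h0 (n + 1) hn) x

theorem iteratedDerivWithin_extCont
    (ha : a < 0) (hc : 0 < c) (hf : ContDiffOn ℝ s f (Icc 0 c)) (hg : ContDiffOn ℝ s g (Icc a 0))
    (h0 : ∀ n ≤ s, iteratedDerivWithin n f (Icc 0 c) 0 = iteratedDerivWithin n g (Icc a 0) 0)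
    {n : ℕ} (hn : n ≤ s) :
    EqOn (iteratedDerivWithin n (extCont f g) (Icc a c))
      (extCont (iteratedDerivWithin n f (Icc 0 c)) (iteratedDerivWithin n g (Icc a 0)))
      (Icc a c) := by
  induction n with
  | zero => intro x _; simp only [iteratedDerivWithin_zero]
  | succ n ih =>
    intro x hx
    have hn' : n < s := hn
    rw [iteratedDerivWithin_succ, derivWithin_congr (ih hn'.le) (ih hn'.le hx)]
    exact (hasDerivWithinAt_extCont_iteratedDerivWithin ha hc hf hg h0 hn' x).derivWithin
      (uniqueDiffOn_Icc (ha.trans hc) x hx)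

theorem iteratedDerivWithin_extCont_eqOn_right
    (ha : a < 0) (hc : 0 < c) (hf : ContDiffOn ℝ s f (Icc 0 c)) (hg : ContDiffOn ℝ s g (Icc a 0))
    (h0 : ∀ n ≤ s, iteratedDerivWithin n f (Icc 0 c) 0 = iteratedDerivWithin n g (Icc a 0) 0)
    {n : ℕ} (hn : n ≤ s) :
    EqOn (iteratedDerivWithin n (extCont f g) (Icc a c)) (iteratedDerivWithin n f (Icc 0 c))
      (Icc 0 c) := fun _ hx =>
  (iteratedDerivWithin_extCont ha hc hf hg h0 hn ⟨ha.le.trans hx.1, hx.2⟩).trans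
    (extCont_eqOn_Ici _ _ hx.1)

theorem iteratedDerivWithin_extCont_eqOn_left
    (ha : a < 0) (hc : 0 < c) (hf : ContDiffOn ℝ s f (Icc 0 c)) (hg : ContDiffOn ℝ s g (Icc a 0))
    (h0 : ∀ n ≤ s, iteratedDerivWithin n f (Icc 0 c) 0 = iteratedDerivWithin n g (Icc a 0) 0)
    {n : ℕ} (hn : n ≤ s) :
    EqOn (iteratedDerivWithin n (extCont f g) (Icc a c)) (iteratedDerivWithin n g (Icc a 0))
      (Icc a 0) := fun _ hx =>
  (iteratedDerivWithin_extCont ha hc hf hg h0 hn ⟨hx.1, hx.2.trans hc.le⟩).trans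
    (extCont_eqOn_Iic (h0 n hn) hx.2)

theorem contDiffOn_extCont
    (ha : a < 0) (hc : 0 < c) (hf : ContDiffOn ℝ s f (Icc 0 c)) (hg : ContDiffOn ℝ s g (Icc a 0))
    (h0 : ∀ n ≤ s, iteratedDerivWithin n f (Icc 0 c) 0 = iteratedDerivWithin n g (Icc a 0) 0) :
    ContDiffOn ℝ s (extCont f g) (Icc a c) := by
  rw [contDiffOn_nat_iff_continuousOn_differentiableOn_deriv (uniqueDiffOn_Icc (ha.trans hc))]
  refine ⟨fun n hn => ?_, fun n hn x hx => ?_⟩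
  · have hn' : (n : WithTop ℕ∞) ≤ s := by exact_mod_cast hn
    have hg' := (hg.continuousOn_iteratedDerivWithin hn' (uniqueDiffOn_Icc ha)).congr
      (iteratedDerivWithin_extCont_eqOn_left ha hc hf hg h0 hn)
    have hf' := (hf.continuousOn_iteratedDerivWithin hn' (uniqueDiffOn_Icc hc)).congr
      (iteratedDerivWithin_extCont_eqOn_right ha hc hf hg h0 hn)
    simpa only [Icc_union_Icc_eq_Icc ha.le hc.le] using
      hg'.union_of_isClosed hf' isClosed_Icc isClosed_Icc
  · exact (hasDerivWithinAt_extCont_iteratedDerivWithin ha hc hf hg h0 hn x)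
      |>.differentiableWithinAt |>.congr (iteratedDerivWithin_extCont ha hc hf hg h0 hn.le)
        (iteratedDerivWithin_extCont ha hc hf hg h0 hn.le hx)

end Gluing

theorem Cr1.extCont {s : ℕ} {a c : ℝ} {f g : ℝ → ℝ} (ha : a < 0) (hc : 0 < c)
    (hf : Cr1 s 0 c f) (hg : Cr1 s a 0 g)
    (h0 : ∀ n ≤ s, iteratedDerivWithin n f (Icc 0 c) 0 = iteratedDerivWithin n g (Icc a 0) 0) :
    Cr1 s a c (extCont f g) := by
  obtain ⟨Kf, hKf⟩ := hf.2
  obtain ⟨Kg, hKg⟩ := hg.2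
  refine ⟨contDiffOn_extCont ha hc hf.1 hg.1 h0, max Kg Kf, ?_⟩
  exact LipschitzOnWith.Icc_union
    (hKg.congr (iteratedDerivWithin_extCont_eqOn_left ha hc hf.1 hg.1 h0 le_rfl).symm)
    (hKf.congr (iteratedDerivWithin_extCont_eqOn_right ha hc hf.1 hg.1 h0 le_rfl).symm)

section ContinuationOperator

variable {r : ℕ} {L0 L1 : ℕ → ℝ → ℝ} {S : Set ℝ}

theorem iteratedDerivWithin_contOp {n : ℕ} (hS : UniqueDiffOn ℝ S) {x : ℝ} (hx : x ∈ S)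
    (hL0 : ∀ m ≤ r, ContDiffOn ℝ n (L0 m) S) (hL1 : ∀ m ≤ r, ContDiffOn ℝ n (L1 m) S)
    (A : Fin 2 → Fin (r + 1) → ℝ) :
    iteratedDerivWithin n (contOp r L0 L1 A) S x =
      ∑ m : Fin (r + 1), A 0 m * iteratedDerivWithin n (L0 m) S x +
        ∑ m : Fin (r + 1), A 1 m * iteratedDerivWithin n (L1 m) S x := by
  have h0 : ∀ m : Fin (r + 1), ContDiffOn ℝ n (fun y => A 0 m * L0 m y) S :=
    fun m => contDiffOn_const.mul (hL0 m m.is_le)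
  have h1 : ∀ m : Fin (r + 1), ContDiffOn ℝ n (fun y => A 1 m * L1 m y) S :=
    fun m => contDiffOn_const.mul (hL1 m m.is_le)
  unfold contOp
  rw [iteratedDerivWithin_fun_add hx hS ((ContDiffOn.sum fun m _ => h0 m) x hx)
      ((ContDiffOn.sum fun m _ => h1 m) x hx),
    iteratedDerivWithin_fun_sum hx hS fun m _ => h0 m x hx,
    iteratedDerivWithin_fun_sum hx hS fun m _ => h1 m x hx]
  simp only [iteratedDerivWithin_const_mul_field]

theorem Cr1.contOp {lo hi : ℝ} (hlh : lo < hi) (hL0 : ∀ m ≤ r, Cr1 r lo hi (L0 m))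
    (hL1 : ∀ m ≤ r, Cr1 r lo hi (L1 m)) (A : Fin 2 → Fin (r + 1) → ℝ) :
    Cr1 r lo hi (contOp r L0 L1 A) := by
  choose K0 hK0 using fun m : Fin (r + 1) => (hL0 m m.is_le).2
  choose K1 hK1 using fun m : Fin (r + 1) => (hL1 m m.is_le).2
  exact ⟨.add (.sum fun m _ => contDiffOn_const.mul (hL0 m m.is_le).1)
      (.sum fun m _ => contDiffOn_const.mul (hL1 m m.is_le).1), _,
    ((LipschitzOnWith.sum fun m _ => (hK0 m).const_mul (A 0 m)).add
      (LipschitzOnWith.sum fun m _ => (hK1 m).const_mul (A 1 m))).congr fun x hx =>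
        (iteratedDerivWithin_contOp (uniqueDiffOn_Icc hlh) hx (fun m hm => (hL0 m hm).1)
          (fun m hm => (hL1 m hm).1) A).symm⟩

theorem sum_mul_ite_val_eq {r : ℕ} (c : Fin (r + 1) → ℝ) (ℓ : Fin (r + 1)) :
    ∑ m : Fin (r + 1), c m * (if (ℓ : ℕ) = m then 1 else 0) = c ℓ := by
  simp [Fin.val_inj]

theorem iteratedDerivWithin_contOp_eq_apply_zero {x : ℝ} (hS : UniqueDiffOn ℝ S) (hx : x ∈ S)
    (hL0 : ∀ m ≤ r, ContDiffOn ℝ r (L0 m) S) (hL1 : ∀ m ≤ r, ContDiffOn ℝ r (L1 m) S)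
    (A : Fin 2 → Fin (r + 1) → ℝ) (ℓ : Fin (r + 1))
    (h0 : ∀ m ≤ r, iteratedDerivWithin ℓ (L0 m) S x = if (ℓ : ℕ) = m then 1 else 0)
    (h1 : ∀ m ≤ r, iteratedDerivWithin ℓ (L1 m) S x = 0) :
    iteratedDerivWithin ℓ (contOp r L0 L1 A) S x = A 0 ℓ := by
  have hℓ : (ℓ : WithTop ℕ∞) ≤ r := by exact_mod_cast ℓ.is_le
  rw [iteratedDerivWithin_contOp hS hx (fun m hm => (hL0 m hm).of_le hℓ)
    (fun m hm => (hL1 m hm).of_le hℓ)]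
  simp only [fun m : Fin (r + 1) => h0 m m.is_le, fun m : Fin (r + 1) => h1 m m.is_le, mul_zero,
    Finset.sum_const_zero, add_zero, sum_mul_ite_val_eq]

theorem iteratedDerivWithin_contOp_eq_apply_one {x : ℝ} (hS : UniqueDiffOn ℝ S) (hx : x ∈ S)
    (hL0 : ∀ m ≤ r, ContDiffOn ℝ r (L0 m) S) (hL1 : ∀ m ≤ r, ContDiffOn ℝ r (L1 m) S)
    (A : Fin 2 → Fin (r + 1) → ℝ) (ℓ : Fin (r + 1))
    (h0 : ∀ m ≤ r, iteratedDerivWithin ℓ (L0 m) S x = 0)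
    (h1 : ∀ m ≤ r, iteratedDerivWithin ℓ (L1 m) S x = if (ℓ : ℕ) = m then 1 else 0) :
    iteratedDerivWithin ℓ (contOp r L0 L1 A) S x = A 1 ℓ := by
  have hℓ : (ℓ : WithTop ℕ∞) ≤ r := by exact_mod_cast ℓ.is_le
  rw [iteratedDerivWithin_contOp hS hx (fun m hm => (hL0 m hm).of_le hℓ)
    (fun m hm => (hL1 m hm).of_le hℓ)]
  simp only [fun m : Fin (r + 1) => h0 m m.is_le, fun m : Fin (r + 1) => h1 m m.is_le, mul_zero,
    Finset.sum_const_zero, zero_add, sum_mul_ite_val_eq]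

end ContinuationOperator

/-- If `F̂` is `s`-exact with respect to `f ∈ C^{r,1}([0,1])`, then the approximate
continuation `f̂_c` belongs to `C_0^{s,1}([1-b,1])`: it is `s`-times continuously
differentiable with Lipschitz `s`-th derivative, and derivatives up to order `s`
match at the endpoints `1-b` and `1`. -/
theorem approx_continuation_regularity (b : ℝ) (hb : 1 < b) (r : ℕ) (f : ℝ → ℝ)
    (hf : Cr1 r 0 1 f)
    (L0 L1 : ℕ → ℝ → ℝ)
    (hL0 : ∀ m ≤ r, Cr1 r (1 - b) 0 (L0 m))
    (hL1 : ∀ m ≤ r, Cr1 r (1 - b) 0 (L1 m))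
    (hd00 : ∀ m ≤ r, ∀ ℓ ≤ r,
      iteratedDerivWithin ℓ (L0 m) (Icc (1 - b) 0) 0 = if ℓ = m then 1 else 0)
    (hd0b : ∀ m ≤ r, ∀ ℓ ≤ r,
      iteratedDerivWithin ℓ (L0 m) (Icc (1 - b) 0) (1 - b) = 0)
    (hd10 : ∀ m ≤ r, ∀ ℓ ≤ r,
      iteratedDerivWithin ℓ (L1 m) (Icc (1 - b) 0) 0 = 0)
    (hd1b : ∀ m ≤ r, ∀ ℓ ≤ r,
      iteratedDerivWithin ℓ (L1 m) (Icc (1 - b) 0) (1 - b) = if ℓ = m then 1 else 0)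
    (s : ℕ) (hs : s ≤ r)
    (Fh : Fin 2 → Fin (r + 1) → ℝ) (hex : sExact r s Fh (Fmat r f)) :
    ContDiffOn ℝ s (extCont f (contOp r L0 L1 Fh)) (Icc (1 - b) 1) ∧
    (∃ K : NNReal, LipschitzOnWith K
      (iteratedDerivWithin s (extCont f (contOp r L0 L1 Fh)) (Icc (1 - b) 1))
      (Icc (1 - b) 1)) ∧
    ∀ ℓ ≤ s, iteratedDerivWithin ℓ (extCont f (contOp r L0 L1 Fh)) (Icc (1 - b) 1) (1 - b)
      = iteratedDerivWithin ℓ (extCont f (contOp r L0 L1 Fh)) (Icc (1 - b) 1) 1 := by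
  have hb0 : 1 - b < 0 := by linarith
  have hS := uniqueDiffOn_Icc hb0
  have hC0 := fun m hm => (hL0 m hm).1
  have hC1 := fun m hm => (hL1 m hm).1
  have hmatch : ∀ ℓ ≤ s, iteratedDerivWithin ℓ f (Icc 0 1) 0 =
      iteratedDerivWithin ℓ (contOp r L0 L1 Fh) (Icc (1 - b) 0) 0 := fun ℓ hℓ => by
    rw [iteratedDerivWithin_contOp_eq_apply_zero hS ⟨hb0.le, le_rfl⟩ hC0 hC1 Fh ⟨ℓ, by omega⟩
      (fun m hm => hd00 m hm ℓ (by omega)) (fun m hm => hd10 m hm ℓ (by omega)), hex 0 _ hℓ]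
    simp [Fmat]
  have hf' := hf.of_le one_pos hs
  have hg' := (Cr1.contOp hb0 hL0 hL1 Fh).of_le hb0 hs
  obtain ⟨hcontDiff, hlip⟩ := Cr1.extCont hb0 one_pos hf' hg' hmatch
  refine ⟨hcontDiff, hlip, fun ℓ hℓ => ?_⟩
  rw [iteratedDerivWithin_extCont_eqOn_left hb0 one_pos hf'.1 hg'.1 hmatch hℓ ⟨le_rfl, hb0.le⟩,
    iteratedDerivWithin_extCont_eqOn_right hb0 one_pos hf'.1 hg'.1 hmatch hℓ ⟨zero_le_one, le_rfl⟩,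
    iteratedDerivWithin_contOp_eq_apply_one hS ⟨le_rfl, hb0.le⟩ hC0 hC1 Fh ⟨ℓ, by omega⟩
      (fun m hm => hd0b m hm ℓ (by omega)) (fun m hm => hd1b m hm ℓ (by omega)), hex 1 _ hℓ]
  simp [Fmat]
end
end

section
/- Let r ≥ 0 be an integer. For all integers 0 ≤ ℓ ≤ r and 0 ≤ m ≤ r, the ℓ-th derivative of P_m^0 satisfies (P_m^0)^{(ℓ)}(−1) = 0 and (P_m^0)^{(ℓ)}(0) = δ_{ℓm} (equal to 1 if ℓ = m and 0 otherwise). -/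
/-!
Since `P_m^0` carries the factor `(1+x)^{r+1}`, its derivatives of order `≤ r` vanish at `-1`.
At `0` the `ℓ`-th derivative is `ℓ!` times the `ℓ`-th coefficient. The sum in `P_m^0` is the
truncation below degree `r-m+1` of `(1+x)^{-(r+1)} = ∑ (-1)^n C(r+n,n) x^n`, so
`(1+x)^{r+1}` times it is `1 + O(x^{r-m+1})`, and the coefficients of `P_m^0` in degrees `≤ r`
are those of `x^m / m!`.
-/

open Real Set

noncomputable section

/-- The Hermite basis polynomial
`P_m^0(x) = (1/m!) x^m (1+x)^{r+1} ∑_{n=0}^{r-m} (-x)^n C(r+n, n)`. -/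
def P0 (r m : ℕ) (x : ℝ) : ℝ :=
  (1 / (Nat.factorial m) : ℝ) * x ^ m * (1 + x) ^ (r + 1) *
    ∑ n ∈ Finset.range (r - m + 1), (-x) ^ n * (Nat.choose (r + n) n : ℝ)

/-- The Hermite basis polynomial
`P_m^1(x) = (1/m!) (1+x)^m (-x)^{r+1} ∑_{n=0}^{r-m} (1+x)^n C(r+n, n)`. -/
def P1 (r m : ℕ) (x : ℝ) : ℝ :=
  (1 / (Nat.factorial m) : ℝ) * (1 + x) ^ m * (-x) ^ (r + 1) *
    ∑ n ∈ Finset.range (r - m + 1), (1 + x) ^ n * (Nat.choose (r + n) n : ℝ)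

/-- The two-point Hermite interpolation polynomial `P_r(F̂)` of a boundary
data matrix `F̂`. -/
def Pmat (r : ℕ) (A : Fin 2 → Fin (r + 1) → ℝ) (x : ℝ) : ℝ :=
  ∑ m : Fin (r + 1), A 0 m * P0 r (m : ℕ) x + ∑ m : Fin (r + 1), A 1 m * P1 r (m : ℕ) x

/-- The max-norm of a `2 × (r+1)` matrix. -/
def maxNorm {r : ℕ} (A : Fin 2 → Fin (r + 1) → ℝ) : ℝ :=
  Finset.univ.sup' Finset.univ_nonempty (fun p : Fin 2 × Fin (r + 1) => |A p.1 p.2|)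

open Polynomial
open scoped Nat

namespace Polynomial

variable {𝕜 : Type*} [NontriviallyNormedField 𝕜]

theorem iteratedDeriv_eval (p : 𝕜[X]) (ℓ : ℕ) (x : 𝕜) :
    iteratedDeriv ℓ (fun x => p.eval x) x = (derivative^[ℓ] p).eval x := by
  induction ℓ generalizing p with
  | zero => rfl
  | succ ℓ ih =>
    have hderiv : _root_.deriv (fun x => p.eval x) = fun x => p.derivative.eval x := by
      ext; exact Polynomial.deriv p
    rw [iteratedDeriv_succ', hderiv, ih, Function.iterate_succ_apply]

theorem iteratedDeriv_eval_zero (p : 𝕜[X]) (ℓ : ℕ) :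
    iteratedDeriv ℓ (fun x => p.eval x) 0 = ℓ ! * p.coeff ℓ := by
  rw [iteratedDeriv_eval, ← coeff_zero_eq_eval_zero, coeff_iterate_derivative, zero_add,
    Nat.descFactorial_self, nsmul_eq_mul]

theorem iteratedDeriv_eval_eq_zero_of_pow_dvd {p : 𝕜[X]} {a : 𝕜} {n ℓ : ℕ}
    (hdvd : (X - C a) ^ n ∣ p) (hℓ : ℓ < n) :
    iteratedDeriv ℓ (fun x => p.eval x) a = 0 := by
  obtain ⟨q, hq⟩ := pow_sub_dvd_iterate_derivative_of_pow_dvd ℓ hdvd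
  simp [iteratedDeriv_eval, hq, zero_pow (Nat.sub_ne_zero_of_lt hℓ)]

end Polynomial

namespace PowerSeries

theorem coeff_mul_trunc_of_mul_eq_one {R : Type*} [CommSemiring R] {f : R[X]} {g : R⟦X⟧}
    (hfg : (f : R⟦X⟧) * g = 1) {j k : ℕ} (hj : j ≤ k) :
    (f * trunc (k + 1) g).coeff j = (1 : R[X]).coeff j := by
  have htrunc : trunc (k + 1) ((f * trunc (k + 1) g : R[X]) : R⟦X⟧) = 1 := by
    rw [Polynomial.coe_mul, trunc_mul_trunc, hfg, trunc_one]
  rw [← htrunc, coeff_trunc, if_pos (Nat.lt_succ_of_le hj), Polynomial.coeff_coe]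

variable {R : Type*} [CommRing R]

theorem one_add_X_pow_mul_mk_neg_one_pow_choose (r : ℕ) :
    (1 + X : R⟦X⟧) ^ (r + 1) * mk (fun n => (-1) ^ n * ((r + n).choose n : R)) = 1 := by
  -- substitute `X ↦ -X` in `(1 - X) ^ (r + 1) * (1 - X) ^ (-(r + 1)) = 1`
  have h := congrArg (rescale (-1 : R)) (invOneSubPow R (r + 1)).inv_val
  rw [invOneSubPow_inv_eq_one_sub_pow, invOneSubPow_val_succ_eq_mk_add_choose, map_mul, map_pow,
    map_sub, map_one, rescale_X, rescale_mk] at h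
  simp only [map_neg, map_one, neg_one_mul, sub_neg_eq_add] at h
  convert h using 4 with n
  rw [Nat.choose_symm_add]

theorem trunc_mk_neg_one_pow_choose (r k : ℕ) :
    trunc (k + 1) (mk (fun n => (-1) ^ n * ((r + n).choose n : R))) =
      ∑ n ∈ Finset.range (k + 1), (-Polynomial.X : R[X]) ^ n * ((r + n).choose n : R[X]) := by
  rw [trunc_apply, Finset.range_eq_Ico]
  refine Finset.sum_congr rfl fun n _ => ?_
  rw [coeff_mk, ← C_mul_X_pow_eq_monomial, neg_pow (Polynomial.X : R[X]), map_mul, map_pow,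
    map_neg, map_one, map_natCast]
  ring

end PowerSeries

theorem coeff_one_add_X_pow_mul_sum_neg_X_pow_choose {R : Type*} [CommRing R] {r k j : ℕ}
    (hj : j ≤ k) :
    ((1 + X : R[X]) ^ (r + 1) *
      ∑ n ∈ Finset.range (k + 1), (-X) ^ n * ((r + n).choose n : R[X])).coeff j =
      (1 : R[X]).coeff j := by
  rw [← PowerSeries.trunc_mk_neg_one_pow_choose]
  refine PowerSeries.coeff_mul_trunc_of_mul_eq_one ?_ hj
  rw [coe_pow, coe_add, coe_one, coe_X]
  exact PowerSeries.one_add_X_pow_mul_mk_neg_one_pow_choose r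

def P0poly (r m : ℕ) : ℝ[X] :=
  C (1 / (m ! : ℝ)) * X ^ m *
    ((1 + X) ^ (r + 1) * ∑ n ∈ Finset.range (r - m + 1), (-X) ^ n * ((r + n).choose n : ℝ[X]))

theorem P0_eq_eval (r m : ℕ) : P0 r m = fun x => (P0poly r m).eval x := by
  funext x
  simp only [P0, P0poly, eval_mul, eval_C, eval_pow, eval_X, eval_add, eval_one, eval_finsetSum,
    eval_neg, eval_natCast]
  ring

theorem X_add_one_pow_dvd_P0poly (r m : ℕ) : (X - C (-1 : ℝ)) ^ (r + 1) ∣ P0poly r m := by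
  rw [map_neg, map_one, sub_neg_eq_add, add_comm, P0poly]
  exact (dvd_mul_right _ _).mul_left _

theorem coeff_P0poly {r m ℓ : ℕ} (hℓ : ℓ ≤ r) :
    (P0poly r m).coeff ℓ = if ℓ = m then 1 / (m ! : ℝ) else 0 := by
  rw [P0poly, mul_assoc, coeff_C_mul, coeff_X_pow_mul']
  split_ifs with hmℓ hℓm hℓm
  · rw [coeff_one_add_X_pow_mul_sum_neg_X_pow_choose (by omega), coeff_one, if_pos (by omega),
      mul_one]
  · rw [coeff_one_add_X_pow_mul_sum_neg_X_pow_choose (by omega), coeff_one, if_neg (by omega),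
      mul_zero]
  · omega
  · rw [mul_zero]

theorem P0_interpolation_general (r m ℓ : ℕ) (hℓ : ℓ ≤ r) :
    iteratedDeriv ℓ (P0 r m) (-1) = 0 ∧
    iteratedDeriv ℓ (P0 r m) 0 = if ℓ = m then 1 else 0 := by
  rw [P0_eq_eval]
  refine ⟨iteratedDeriv_eval_eq_zero_of_pow_dvd (X_add_one_pow_dvd_P0poly r m)
    (Nat.lt_succ_of_le hℓ), ?_⟩
  rw [iteratedDeriv_eval_zero, coeff_P0poly hℓ]
  split_ifs with hℓm
  · subst hℓm
    field_simp
  · rw [mul_zero]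

/-- Interpolation properties of `P_m^0`: for `0 ≤ ℓ, m ≤ r`,
`(P_m^0)^{(ℓ)}(-1) = 0` and `(P_m^0)^{(ℓ)}(0) = δ_{ℓm}`. -/
theorem P0_interpolation (r m ℓ : ℕ) (hm : m ≤ r) (hℓ : ℓ ≤ r) :
    iteratedDeriv ℓ (P0 r m) (-1) = 0 ∧
    iteratedDeriv ℓ (P0 r m) 0 = if ℓ = m then 1 else 0 :=
  P0_interpolation_general r m ℓ hℓ
end
end
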